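/- arXiv:math-ph/0609026 — 2 statements merged into one kernel-verified Lean document; each statement's English description precedes it below -/
import Mathlib

section
/- Let a, m, α > 0, ξ ∈ ℝ, and let f be the positive L²-normalized ground state of the operator H[a,m,α;ξ] (acting as -f'' + (t-ξ)²f - αf on ℝ₊ and (1/m)(-f'' + (t-ξ)²f) + aαf on ℝ₋, with f'(0₊) = (1/m)f'(0₋)). Then f(0) > 0; i.e., the ground state does not vanish at the interface. -/
open MeasureTheory Set Filter Topology

noncomputable section

/-- `B¹(ℝ₊)`-type regularity on the half line (smooth core):
`u`, `u'` and `t·u` are square integrable on `(0,∞)`. -/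
def MemB1p (u : ℝ → ℝ) : Prop :=
  Differentiable ℝ u ∧
  IntegrableOn (fun t => (u t)^2) (Ioi 0) ∧
  IntegrableOn (fun t => (deriv u t)^2) (Ioi 0) ∧
  IntegrableOn (fun t => t^2 * (u t)^2) (Ioi 0)

/-- The Robin quadratic form `q[γ,ξ]` of `-d²/dt² + (t-ξ)²` on `ℝ₊`. -/
def qRobin (γ ξ : ℝ) (u : ℝ → ℝ) : ℝ :=
  (∫ t in Ioi (0:ℝ), ((deriv u t)^2 + (t - ξ)^2 * (u t)^2)) + γ * (u 0)^2

/-- squared `L²(ℝ₊)` norm. -/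
def np (u : ℝ → ℝ) : ℝ := ∫ t in Ioi (0:ℝ), (u t)^2

/-- Lowest Robin eigenvalue `λ₁(γ,ξ)`, defined variationally. -/
def lambda1 (γ ξ : ℝ) : ℝ :=
  sInf {r : ℝ | ∃ u : ℝ → ℝ, MemB1p u ∧ np u ≠ 0 ∧ r = qRobin γ ξ u / np u}

/-- Lowest Neumann eigenvalue `λ₁^N(ξ)` (Robin with `γ = 0`). -/
def lambda1N (ξ : ℝ) : ℝ := lambda1 0 ξ

/-- Lowest Dirichlet eigenvalue `λ₁^D(ξ)`, defined variationally. -/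
def lambda1D (ξ : ℝ) : ℝ :=
  sInf {r : ℝ | ∃ u : ℝ → ℝ, MemB1p u ∧ u 0 = 0 ∧ np u ≠ 0 ∧ r = qRobin 0 ξ u / np u}

/-- The de Gennes constant `Θ₀ = inf_ξ λ₁^N(ξ)`. -/
def Theta0 : ℝ := sInf (Set.range lambda1N)

/-- `B¹(ℝ)`-type regularity on the whole line (smooth core). -/
def MemB1 (u : ℝ → ℝ) : Prop :=
  Differentiable ℝ u ∧
  Integrable (fun t => (u t)^2) ∧
  Integrable (fun t => (deriv u t)^2) ∧
  Integrable (fun t => t^2 * (u t)^2)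

/-- The interface quadratic form `Q[a,m,α;ξ]` on `B¹(ℝ)`. -/
def QI (a m α ξ : ℝ) (u : ℝ → ℝ) : ℝ :=
  (∫ t in Ioi (0:ℝ), ((deriv u t)^2 + (t - ξ)^2 * (u t)^2 - α * (u t)^2)) +
  ∫ t in Iio (0:ℝ), ((1/m) * ((deriv u t)^2 + (t - ξ)^2 * (u t)^2) + a * α * (u t)^2)

/-- squared `L²(ℝ)` norm. -/
def nR (u : ℝ → ℝ) : ℝ := ∫ t, (u t)^2

/-- Ground state energy `μ₁(a,m,α;ξ)` of the interface operator, defined variationally. -/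
def mu1 (a m α ξ : ℝ) : ℝ :=
  sInf {r : ℝ | ∃ u : ℝ → ℝ, MemB1 u ∧ nR u ≠ 0 ∧ r = QI a m α ξ u / nR u}

/-! If `f 0 = 0`, then `0` is a minimum point of `f ≥ 0`, so the one-sided derivatives satisfy
`f'(0₊) ≥ 0 ≥ f'(0₋)`, and the transmission condition `f'(0₊) = f'(0₋) / m` forces both to vanish.
On each half line `f` then solves a linear second-order ODE with zero Cauchy data at `0`, so by
Grönwall's inequality for the system `(f, f')` it vanishes identically, contradicting `‖f‖₂ = 1`. -/

theorem IsLocalMinOn.hasDerivWithinAt_Ici_nonneg {f : ℝ → ℝ} {a f' : ℝ}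
    (h : IsLocalMinOn f (Ici a) a) (hf : HasDerivWithinAt f f' (Ici a) a) : 0 ≤ f' := by
  have hcone : (1 : ℝ) ∈ posTangentConeAt (Ici a) a :=
    mem_posTangentConeAt_of_segment_subset <| by
      rw [segment_eq_Icc (by linarith)]
      exact Icc_subset_Ici_self
  simpa using h.hasFDerivWithinAt_nonneg hf.hasFDerivWithinAt hcone

theorem IsLocalMinOn.hasDerivWithinAt_Iic_nonpos {f : ℝ → ℝ} {a f' : ℝ}
    (h : IsLocalMinOn f (Iic a) a) (hf : HasDerivWithinAt f f' (Iic a) a) : f' ≤ 0 := by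
  have hcone : (-1 : ℝ) ∈ posTangentConeAt (Iic a) a :=
    mem_posTangentConeAt_of_segment_subset <| by
      rw [segment_symm, segment_eq_Icc (by linarith)]
      exact Icc_subset_Iic_self.trans (Iic_subset_Iic.2 (by linarith))
  simpa using h.hasFDerivWithinAt_nonneg hf.hasFDerivWithinAt hcone

section OneSidedDeriv

variable {E : Type*} [NormedAddCommGroup E] [NormedSpace ℝ E]

theorem hasDerivWithinAt_Ici_of_tendsto {f g : ℝ → E} {a : ℝ} {e : E}
    (hf : ContinuousWithinAt f (Ici a) a) (hfg : ∀ t, a < t → HasDerivAt f (g t) t)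
    (hg : Tendsto g (𝓝[>] a) (𝓝 e)) : HasDerivWithinAt f e (Ici a) a :=
  hasDerivWithinAt_Ici_of_tendsto_deriv (s := Ioi a)
    (fun t ht => (hfg t ht).differentiableAt.differentiableWithinAt)
    (hf.mono Ioi_subset_Ici_self) self_mem_nhdsWithin
    (hg.congr' (eventually_nhdsWithin_of_forall fun t ht => (hfg t ht).deriv.symm))

theorem hasDerivWithinAt_Iic_of_tendsto {f g : ℝ → E} {a : ℝ} {e : E}
    (hf : ContinuousWithinAt f (Iic a) a) (hfg : ∀ t, t < a → HasDerivAt f (g t) t)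
    (hg : Tendsto g (𝓝[<] a) (𝓝 e)) : HasDerivWithinAt f e (Iic a) a :=
  hasDerivWithinAt_Iic_of_tendsto_deriv (s := Iio a)
    (fun t ht => (hfg t ht).differentiableAt.differentiableWithinAt)
    (hf.mono Iio_subset_Iic_self) self_mem_nhdsWithin
    (hg.congr' (eventually_nhdsWithin_of_forall fun t ht => (hfg t ht).deriv.symm))

end OneSidedDeriv

theorem eqOn_zero_of_second_order_linear_ode {c f g : ℝ → ℝ} {a b : ℝ}
    (hc : ContinuousOn c (Icc a b)) (hf : ContinuousOn f (Icc a b))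
    (hg : ContinuousOn g (Icc a b))
    (hf' : ∀ t ∈ Ico a b, HasDerivWithinAt f (g t) (Ici t) t)
    (hg' : ∀ t ∈ Ico a b, HasDerivWithinAt g (c t * f t) (Ici t) t)
    (hfa : f a = 0) (hga : g a = 0) : EqOn f 0 (Icc a b) := by
  obtain ⟨C, hC⟩ := isCompact_Icc.exists_bound_of_continuousOn hc
  have hbound : ∀ t ∈ Ico a b, ‖(g t, c t * f t)‖ ≤ max 1 C * ‖(f t, g t)‖ := by
    intro t ht
    have hct : ‖c t‖ ≤ max 1 C := (hC t (Ico_subset_Icc_self ht)).trans (le_max_right _ _)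
    simp only [Prod.norm_def, norm_mul]
    refine max_le ?_ ?_
    · calc ‖g t‖ ≤ 1 * max ‖f t‖ ‖g t‖ := by rw [one_mul]; exact le_max_right _ _
        _ ≤ max 1 C * max ‖f t‖ ‖g t‖ := by gcongr; exact le_max_left _ _
    · gcongr
      exact le_max_left _ _
  intro t ht
  exact congrArg Prod.fst <| eq_zero_of_abs_deriv_le_mul_abs_self_of_eq_zero_right
    (hf.prodMk hg) (fun t ht => (hf' t ht).prodMk (hg' t ht)) (by simp [hfa, hga]) hbound t ht

theorem eqOn_zero_Ici_of_second_order_linear_ode {c f g : ℝ → ℝ} {a : ℝ}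
    (hc : ContinuousOn c (Ici a)) (hf : ContinuousWithinAt f (Ici a) a)
    (hf' : ∀ t, a < t → HasDerivAt f (g t) t) (hg' : ∀ t, a < t → HasDerivAt g (c t * f t) t)
    (hfa : f a = 0) (hg : Tendsto g (𝓝[>] a) (𝓝 0)) : EqOn f 0 (Ici a) := by
  -- `g` is only constrained on `(a, ∞)`: give it its right limit at `a`
  set G := Function.update g a 0
  have hGa : G a = 0 := Function.update_self ..
  have hGg : ∀ t, a < t → G t = g t := fun t ht => Function.update_of_ne ht.ne' _ _
  have hG' : ∀ t, a < t → HasDerivAt G (c t * f t) t := fun t ht =>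
    (hg' t ht).congr_of_eventuallyEq <| (eventually_gt_nhds ht).mono hGg
  have hG_cont : ContinuousWithinAt G (Ici a) a := continuousWithinAt_Ioi_iff_Ici.1 <| by
    rw [ContinuousWithinAt, hGa]
    exact hg.congr' (eventually_nhdsWithin_of_forall fun t ht => (hGg t ht).symm)
  have hcf : Tendsto (fun t => c t * f t) (𝓝[>] a) (𝓝 0) := by
    have h := ((hc a self_mem_Ici).mul hf).mono_left (nhdsWithin_mono _ Ioi_subset_Ici_self)
    rwa [Pi.mul_apply, hfa, mul_zero] at h
  have hf'a : HasDerivWithinAt f 0 (Ici a) a := hasDerivWithinAt_Ici_of_tendsto hf hf' hg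
  have hG'a : HasDerivWithinAt G 0 (Ici a) a := hasDerivWithinAt_Ici_of_tendsto hG_cont hG' hcf
  intro b hb
  refine eqOn_zero_of_second_order_linear_ode (hc.mono Icc_subset_Ici_self) ?_ ?_ ?_ ?_ hfa hGa
    (right_mem_Icc.2 hb)
  · intro t ht
    rcases ht.1.eq_or_lt with rfl | hat
    · exact hf.mono Icc_subset_Ici_self
    · exact (hf' t hat).continuousAt.continuousWithinAt
  · intro t ht
    rcases ht.1.eq_or_lt with rfl | hat
    · exact hG_cont.mono Icc_subset_Ici_self
    · exact (hG' t hat).continuousAt.continuousWithinAt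
  · intro t ht
    rcases ht.1.eq_or_lt with rfl | hat
    · exact hGa ▸ hf'a
    · exact hGg t hat ▸ (hf' t hat).hasDerivWithinAt
  · intro t ht
    rcases ht.1.eq_or_lt with rfl | hat
    · rwa [hfa, mul_zero]
    · exact (hG' t hat).hasDerivWithinAt

theorem eqOn_zero_Iic_of_second_order_linear_ode {c f g : ℝ → ℝ} {a : ℝ}
    (hc : ContinuousOn c (Iic a)) (hf : ContinuousWithinAt f (Iic a) a)
    (hf' : ∀ t, t < a → HasDerivAt f (g t) t) (hg' : ∀ t, t < a → HasDerivAt g (c t * f t) t)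
    (hfa : f a = 0) (hg : Tendsto g (𝓝[<] a) (𝓝 0)) : EqOn f 0 (Iic a) := by
  have hneg : MapsTo Neg.neg (Ici (-a)) (Iic a) := fun _ ht => mem_Iic.2 (neg_le.1 ht)
  have hreflect : EqOn (fun t => f (-t)) 0 (Ici (-a)) := by
    refine eqOn_zero_Ici_of_second_order_linear_ode (c := fun t => c (-t))
      (g := fun t => -g (-t)) (hc.comp continuousOn_neg hneg) ?_ (fun t ht => ?_)
      (fun t ht => ?_) (by simpa using hfa) ?_
    · have h : ContinuousWithinAt f (Iic a) (-(-a)) := by rwa [neg_neg]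
      exact h.comp continuousWithinAt_neg hneg
    · have h := (hf' (-t) (neg_lt.1 ht)).comp t (hasDerivAt_neg t)
      rwa [mul_neg_one] at h
    · have h := ((hg' (-t) (neg_lt.1 ht)).comp t (hasDerivAt_neg t)).neg
      rwa [mul_neg_one, neg_neg] at h
    · simpa using (hg.comp tendsto_neg_nhdsGT_neg).neg
  intro t ht
  simpa using hreflect (neg_le_neg ht : -a ≤ -t)

theorem groundState_pos_at_interface_general (a m α ξ μ dplus dminus : ℝ) (f g : ℝ → ℝ)
    (hm : 0 < m)
    (hfc : Continuous f)
    (hfg : ∀ t : ℝ, t ≠ 0 → HasDerivAt f (g t) t)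
    (hdp : Tendsto g (𝓝[>] (0:ℝ)) (𝓝 dplus))
    (hdm : Tendsto g (𝓝[<] (0:ℝ)) (𝓝 dminus))
    (htrans : dplus = (1/m) * dminus)
    (hODEp : ∀ t : ℝ, 0 < t → HasDerivAt g (((t - ξ)^2 - α - μ) * f t) t)
    (hODEm : ∀ t : ℝ, t < 0 → HasDerivAt g (((t - ξ)^2 + m * (a * α - μ)) * f t) t)
    (hpos : ∀ t : ℝ, 0 ≤ f t)
    (hnorm : (∫ t : ℝ, (f t)^2) = 1) :
    0 < f 0 := by
  refine (hpos 0).lt_of_ne fun h0 => ?_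
  have hmin : IsMinOn f univ 0 := fun t _ => h0 ▸ hpos t
  have hdp_nonneg : 0 ≤ dplus :=
    (hmin.on_subset (subset_univ _)).localize.hasDerivWithinAt_Ici_nonneg
      (hasDerivWithinAt_Ici_of_tendsto hfc.continuousWithinAt (fun t ht => hfg t ht.ne') hdp)
  have hdm_nonpos : dminus ≤ 0 :=
    (hmin.on_subset (subset_univ _)).localize.hasDerivWithinAt_Iic_nonpos
      (hasDerivWithinAt_Iic_of_tendsto hfc.continuousWithinAt (fun t ht => hfg t ht.ne) hdm)
  have hdp0 : dplus = 0 :=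
    (htrans ▸ mul_nonpos_of_nonneg_of_nonpos (by positivity) hdm_nonpos).antisymm hdp_nonneg
  have hdm0 : dminus = 0 := by
    rw [hdp0] at htrans
    simpa [hm.ne'] using htrans.symm
  have hright : EqOn f 0 (Ici 0) :=
    eqOn_zero_Ici_of_second_order_linear_ode (by fun_prop) hfc.continuousWithinAt
      (fun t ht => hfg t ht.ne') hODEp h0.symm (hdp0 ▸ hdp)
  have hleft : EqOn f 0 (Iic 0) :=
    eqOn_zero_Iic_of_second_order_linear_ode (by fun_prop) hfc.continuousWithinAt
      (fun t ht => hfg t ht.ne) hODEm h0.symm (hdm0 ▸ hdm)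
  have hf : f = 0 := funext fun t => (le_total 0 t).elim (fun ht => hright ht) (fun ht => hleft ht)
  simp [hf] at hnorm

/-- the (nonnegative, normalized) ground state of the interface
operator `H[a,m,α;ξ]` does not vanish at the interface: `f(0) > 0`.

`g` is the derivative of `f` away from `0`, with one-sided limits `dplus`, `dminus`
at `0` satisfying the transmission condition `dplus = (1/m) dminus`; the eigenvalue
equations hold on each half line with eigenvalue `μ = μ₁(a,m,α;ξ)`. -/
theorem groundState_pos_at_interface (a m α ξ μ dplus dminus : ℝ) (f g : ℝ → ℝ)
    (ha : 0 < a) (hm : 0 < m) (hα : 0 < α)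
    (hfc : Continuous f)
    (hfg : ∀ t : ℝ, t ≠ 0 → HasDerivAt f (g t) t)
    (hdp : Tendsto g (𝓝[>] (0:ℝ)) (𝓝 dplus))
    (hdm : Tendsto g (𝓝[<] (0:ℝ)) (𝓝 dminus))
    (htrans : dplus = (1/m) * dminus)
    (hODEp : ∀ t : ℝ, 0 < t → HasDerivAt g (((t - ξ)^2 - α - μ) * f t) t)
    (hODEm : ∀ t : ℝ, t < 0 → HasDerivAt g (((t - ξ)^2 + m * (a * α - μ)) * f t) t)
    (hpos : ∀ t : ℝ, 0 ≤ f t)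
    (hnorm : (∫ t : ℝ, (f t)^2) = 1)
    (hμ : μ = mu1 a m α ξ) :
    0 < f 0 :=
  groundState_pos_at_interface_general a m α ξ μ dplus dminus f g hm hfc hfg hdp hdm htrans hODEp
    hODEm hpos hnorm
end
end

section
/- Let a, m > 0 with m > 1, and let α ∈ (Θ₀, 1) satisfy inf_{ξ∈ℝ} μ₁(a,m,α;ξ) = 0. Then for every β > α one has inf_{ξ∈ℝ} μ₁(a,m,β;ξ) < 0. Consequently there is at most one α > 0 with inf_ξ μ₁(a,m,α;ξ) = 0. -/
/-! Write `‖u‖²₊`, `‖u‖²₋` for the squared `L²` norms of `u` on `(0, ∞)` and `(-∞, 0)`.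
The Neumann realisation of `-d²/dt² + (t - ξ)²` on `(0, ∞)` is bounded below by `1/12`
uniformly in `ξ`: off a unit interval next to `ξ` the potential is at least `1/4`, and on that
interval `u` is controlled by its values on the adjacent unit interval and by `u'`. Hence
`Q[a,m,α;ξ](u) ≥ (1/12 - α) ‖u‖²₊ + a α ‖u‖²₋`, so a normalised `u` with `Q[a,m,α;ξ](u)` close
to `0` has `‖u‖²₊ - a ‖u‖²₋` bounded away from `0`. Since
`Q[a,m,β;ξ](u) = Q[a,m,α;ξ](u) - (β - α) (‖u‖²₊ - a ‖u‖²₋)`, such a near-minimiser has negative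
energy for every `β > α`. Uniqueness follows by applying this to the smaller of two candidates. -/

open MeasureTheory Set Filter Topology

noncomputable section

theorem sq_setIntegral_le_measureReal_mul {α : Type*} [MeasurableSpace α] {μ : Measure α}
    {f : α → ℝ} {S : Set α} (hS : μ S ≠ ⊤)
    (hf : AEStronglyMeasurable f (μ.restrict S)) (hf2 : IntegrableOn (fun x => f x ^ 2) S μ) :
    (∫ x in S, f x ∂μ) ^ 2 ≤ μ.real S * ∫ x in S, f x ^ 2 ∂μ := by
  rcases eq_or_ne (μ S) 0 with h0 | h0
  · simp [Measure.restrict_eq_zero.mpr h0]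
  have : Fact (μ S < ⊤) := ⟨hS.lt_top⟩
  have hf1 : IntegrableOn f S μ :=
    ((memLp_two_iff_integrable_sq hf).2 hf2).integrable one_le_two
  have hJ := (even_two.convexOn_pow).map_set_average_le (continuous_pow 2).continuousOn
    isClosed_univ h0 hS (by simp) hf1 hf2
  have hpos : 0 < μ.real S := ENNReal.toReal_pos h0 hS
  rw [setAverage_eq, setAverage_eq, smul_eq_mul, smul_eq_mul, mul_pow] at hJ
  field_simp at hJ
  exact hJ

section RealLine

variable {u : ℝ → ℝ}

theorem sq_sub_le_mul_setIntegral_deriv_sq (hu : Differentiable ℝ u) {t s : ℝ} (hts : t ≤ s)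
    (hd : IntegrableOn (fun x => deriv u x ^ 2) (Ioc t s)) :
    (u s - u t) ^ 2 ≤ (s - t) * ∫ x in Ioc t s, deriv u x ^ 2 := by
  have hmeas := (measurable_deriv u).aestronglyMeasurable (μ := volume.restrict (Ioc t s))
  have hd1 : IntegrableOn (deriv u) (Ioc t s) :=
    ((memLp_two_iff_integrable_sq hmeas).2 hd).integrable one_le_two
  have hFTC : u s - u t = ∫ x in Ioc t s, deriv u x := by
    rw [← intervalIntegral.integral_of_le hts, intervalIntegral.integral_deriv_eq_sub
      (fun x _ => hu x) ((intervalIntegrable_iff_integrableOn_Ioc_of_le hts).2 hd1)]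
  rw [hFTC]
  simpa [Real.volume_real_Ioc_of_le hts] using
    sq_setIntegral_le_measureReal_mul (by simp) hmeas hd

theorem setIntegral_sq_Ioc_le (hu : Differentiable ℝ u) (p : ℝ)
    (hd : IntegrableOn (fun x => deriv u x ^ 2) (Ioc p (p + 2))) :
    ∫ t in Ioc p (p + 1), u t ^ 2 ≤
      2 * (∫ s in Ioc (p + 1) (p + 2), u s ^ 2) + 4 * ∫ x in Ioc p (p + 2), deriv u x ^ 2 := by
  set D := ∫ x in Ioc p (p + 2), deriv u x ^ 2
  have hsq : Continuous fun t => u t ^ 2 := hu.continuous.pow 2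
  have hpoint : ∀ t ∈ Ioc p (p + 1), ∀ s ∈ Ioc (p + 1) (p + 2), u t ^ 2 ≤ 2 * u s ^ 2 + 4 * D := by
    intro t ht s hs
    have hsub : Ioc t s ⊆ Ioc p (p + 2) := Ioc_subset_Ioc ht.1.le hs.2
    have hloc : ∫ x in Ioc t s, deriv u x ^ 2 ≤ D :=
      setIntegral_mono_set hd (ae_of_all _ fun x => sq_nonneg _) hsub.eventuallyLE
    have hdiff := sq_sub_le_mul_setIntegral_deriv_sq hu (ht.2.trans hs.1.le) (hd.mono_set hsub)
    have hloc0 : 0 ≤ ∫ x in Ioc t s, deriv u x ^ 2 :=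
      setIntegral_nonneg measurableSet_Ioc fun _ _ => sq_nonneg _
    nlinarith [sq_nonneg (u t - 2 * u s), ht.1, ht.2, hs.1, hs.2]
  have hvol₁ : volume.real (Ioc p (p + 1)) = 1 := by
    rw [Real.volume_real_Ioc_of_le (by linarith)]
    ring
  have hvol₂ : volume.real (Ioc (p + 1) (p + 2)) = 1 := by
    rw [Real.volume_real_Ioc_of_le (by linarith)]
    ring
  have hS : IntegrableOn (fun s => 2 * u s ^ 2 + 4 * D) (Ioc (p + 1) (p + 2)) :=
    (hsq.integrableOn_Ioc.const_mul 2).add (integrableOn_const measure_Ioc_lt_top.ne)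
  have havg : ∀ t ∈ Ioc p (p + 1), u t ^ 2 ≤ 2 * (∫ s in Ioc (p + 1) (p + 2), u s ^ 2) + 4 * D := by
    intro t ht
    calc u t ^ 2 = ∫ _ in Ioc (p + 1) (p + 2), u t ^ 2 := by simp [hvol₂]
      _ ≤ ∫ s in Ioc (p + 1) (p + 2), (2 * u s ^ 2 + 4 * D) :=
        setIntegral_mono_on (integrableOn_const measure_Ioc_lt_top.ne) hS measurableSet_Ioc
          (hpoint t ht)
      _ = _ := by
        rw [integral_add (hsq.integrableOn_Ioc.const_mul 2)
          (integrableOn_const measure_Ioc_lt_top.ne), integral_const_mul]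
        simp [hvol₂]
  calc ∫ t in Ioc p (p + 1), u t ^ 2
      ≤ ∫ _ in Ioc p (p + 1), (2 * (∫ s in Ioc (p + 1) (p + 2), u s ^ 2) + 4 * D) :=
        setIntegral_mono_on hsq.integrableOn_Ioc (integrableOn_const measure_Ioc_lt_top.ne)
          measurableSet_Ioc havg
    _ = _ := by simp [hvol₁]

theorem MeasureTheory.Integrable.sub_sq_mul_sq {μ : Measure ℝ}
    (h2 : Integrable (fun t => u t ^ 2) μ) (ht2 : Integrable (fun t => t ^ 2 * u t ^ 2) μ)
    (ξ : ℝ) : Integrable (fun t => (t - ξ) ^ 2 * u t ^ 2) μ := by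
  refine ((ht2.const_mul 2).add (h2.const_mul (2 * ξ ^ 2))).mono'
    (((continuous_id.sub continuous_const).pow 2).aestronglyMeasurable.mul
      h2.aestronglyMeasurable) (ae_of_all _ fun t => ?_)
  rw [Real.norm_of_nonneg (by positivity)]
  simp only [Pi.add_apply]
  nlinarith [mul_nonneg (sq_nonneg (t + ξ)) (sq_nonneg (u t))]

theorem np_le_twelve_mul_qRobin_zero (hu : MemB1p u) (ξ : ℝ) : np u ≤ 12 * qRobin 0 ξ u := by
  obtain ⟨hdiff, h2, hd2, ht2⟩ := hu
  have hV : IntegrableOn (fun t => (t - ξ) ^ 2 * u t ^ 2) (Ioi 0) := h2.sub_sq_mul_sq ht2 ξ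
  set p := max (ξ - 1 / 2) 0
  have hp0 : 0 ≤ p := le_max_right _ _
  have hpos : ∀ q, Ioc p q ⊆ Ioi 0 := fun q t ht => hp0.trans_lt ht.1
  have hfar : ∀ t ∈ Ioi 0 \ Ioc p (p + 1), u t ^ 2 ≤ 4 * ((t - ξ) ^ 2 * u t ^ 2) := by
    rintro t ⟨ht0, htB⟩
    have hξ : 1 / 4 ≤ (t - ξ) ^ 2 := by
      rcases le_or_gt t p with htp | htp
      · have : t ≤ ξ - 1 / 2 := (le_max_iff.mp htp).resolve_right (not_le.mpr ht0)
        nlinarith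
      · have : p + 1 < t := by simpa [htp] using htB
        nlinarith [le_max_left (ξ - 1 / 2) 0]
    nlinarith [sq_nonneg (u t)]
  have hfar_int : ∫ t in Ioi 0 \ Ioc p (p + 1), u t ^ 2 ≤
      4 * ∫ t in Ioi 0, (t - ξ) ^ 2 * u t ^ 2 := by
    rw [← integral_const_mul]
    calc ∫ t in Ioi 0 \ Ioc p (p + 1), u t ^ 2
        ≤ ∫ t in Ioi 0 \ Ioc p (p + 1), 4 * ((t - ξ) ^ 2 * u t ^ 2) :=
          setIntegral_mono_on (h2.mono_set sdiff_subset)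
            (IntegrableOn.mono_set (hV.const_mul 4) sdiff_subset)
            (measurableSet_Ioi.diff measurableSet_Ioc) hfar
      _ ≤ _ := setIntegral_mono_set (hV.const_mul 4) (ae_of_all _ fun t => by positivity)
          sdiff_subset.eventuallyLE
  have hnext : ∫ t in Ioc (p + 1) (p + 2), u t ^ 2 ≤ ∫ t in Ioi 0 \ Ioc p (p + 1), u t ^ 2 :=
    setIntegral_mono_set (h2.mono_set sdiff_subset) (ae_of_all _ fun t => sq_nonneg _)
      (LE.le.eventuallyLE fun t ht =>
        ⟨hp0.trans_lt (by linarith [ht.1]), fun h => by linarith [h.2, ht.1]⟩)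
  have hderiv : ∫ t in Ioc p (p + 2), deriv u t ^ 2 ≤ ∫ t in Ioi 0, deriv u t ^ 2 :=
    setIntegral_mono_set hd2 (ae_of_all _ fun t => sq_nonneg _) (hpos _).eventuallyLE
  have hnear := setIntegral_sq_Ioc_le hdiff p (hd2.mono_set (hpos _))
  have hsplit : np u = (∫ t in Ioc p (p + 1), u t ^ 2) + ∫ t in Ioi 0 \ Ioc p (p + 1), u t ^ 2 := by
    rw [np, ← integral_inter_add_sdiff measurableSet_Ioc h2, inter_eq_right.mpr (hpos _)]
  have hq : qRobin 0 ξ u =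
      (∫ t in Ioi 0, deriv u t ^ 2) + ∫ t in Ioi 0, (t - ξ) ^ 2 * u t ^ 2 := by
    rw [qRobin, integral_add hd2 hV, zero_mul, add_zero]
  have hD0 : 0 ≤ ∫ t in Ioi 0, deriv u t ^ 2 :=
    setIntegral_nonneg measurableSet_Ioi fun t _ => sq_nonneg _
  linarith

theorem MemB1.memB1p (hu : MemB1 u) : MemB1p u :=
  ⟨hu.1, hu.2.1.integrableOn, hu.2.2.1.integrableOn, hu.2.2.2.integrableOn⟩

theorem memB1_of_contDiff_of_hasCompactSupport (hu : ContDiff ℝ 1 u) (hs : HasCompactSupport u) :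
    MemB1 u := by
  have hs2 : HasCompactSupport fun t => u t ^ 2 := hs.comp_left (g := fun x : ℝ => x ^ 2) (by simp)
  have hd2 : HasCompactSupport fun t => deriv u t ^ 2 :=
    hs.deriv.comp_left (g := fun x : ℝ => x ^ 2) (by simp)
  have hc2 : Continuous fun t => u t ^ 2 := hu.continuous.pow 2
  have hcd2 : Continuous fun t => deriv u t ^ 2 := (hu.continuous_deriv le_rfl).pow 2
  have hct2 : Continuous fun t : ℝ => t ^ 2 * u t ^ 2 := (continuous_pow 2).mul hc2
  exact ⟨hu.differentiable one_ne_zero, hc2.integrable_of_hasCompactSupport hs2,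
    hcd2.integrable_of_hasCompactSupport hd2, hct2.integrable_of_hasCompactSupport hs2.mul_left⟩

theorem nR_pos_of_ne_zero (hn : nR u ≠ 0) : 0 < nR u :=
  (integral_nonneg fun t => sq_nonneg (u t)).lt_of_ne' hn

end RealLine

theorem exists_memB1_nR_ne_zero : ∃ u, MemB1 u ∧ nR u ≠ 0 := by
  let φ : ContDiffBump (0 : ℝ) := ⟨1, 2, one_pos, one_lt_two⟩
  have hs2 : HasCompactSupport fun t => φ t ^ 2 :=
    φ.hasCompactSupport.comp_left (g := fun x : ℝ => x ^ 2) (by simp)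
  have hc2 : Continuous fun t => φ t ^ 2 := φ.continuous.pow 2
  have hφ0 : φ 0 ^ 2 ≠ 0 := by
    simp [φ.one_of_mem_closedBall (Metric.mem_closedBall_self φ.rIn_pos.le)]
  exact ⟨φ, memB1_of_contDiff_of_hasCompactSupport φ.contDiff φ.hasCompactSupport,
    (hc2.integral_pos_of_hasCompactSupport_nonneg_nonzero hs2 (fun t => sq_nonneg (φ t)) hφ0).ne'⟩

section QI

variable {u : ℝ → ℝ} {a m γ ξ : ℝ}

theorem nR_eq_add (hu : MemB1 u) : nR u = (∫ t in Iio 0, u t ^ 2) + np u := by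
  rw [nR, np, ← intervalIntegral.integral_Iic_add_Ioi hu.2.1.integrableOn hu.2.1.integrableOn,
    setIntegral_congr_set Iio_ae_eq_Iic]

theorem QI_eq (hu : MemB1 u) :
    QI a m γ ξ u = qRobin 0 ξ u - γ * np u +
      ((1 / m) * (∫ t in Iio 0, (deriv u t ^ 2 + (t - ξ) ^ 2 * u t ^ 2)) +
        a * γ * ∫ t in Iio 0, u t ^ 2) := by
  have hE : Integrable fun t => deriv u t ^ 2 + (t - ξ) ^ 2 * u t ^ 2 :=
    hu.2.2.1.add (hu.2.1.sub_sq_mul_sq hu.2.2.2 ξ)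
  rw [QI, qRobin, np, integral_sub hE.integrableOn (hu.2.1.integrableOn.const_mul γ),
    integral_add (hE.integrableOn.const_mul _) (hu.2.1.integrableOn.const_mul _),
    integral_const_mul, integral_const_mul, integral_const_mul]
  ring

theorem QI_eq_QI_sub (hu : MemB1 u) (α β : ℝ) :
    QI a m β ξ u = QI a m α ξ u - (β - α) * (np u - a * ∫ t in Iio 0, u t ^ 2) := by
  rw [QI_eq hu, QI_eq hu]
  ring

theorem le_QI (hu : MemB1 u) (hm : 0 ≤ m) :
    (1 / 12 - γ) * np u + a * γ * (∫ t in Iio 0, u t ^ 2) ≤ QI a m γ ξ u := by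
  have hR := np_le_twelve_mul_qRobin_zero hu.memB1p ξ
  have hL : 0 ≤ (1 / m) * ∫ t in Iio 0, (deriv u t ^ 2 + (t - ξ) ^ 2 * u t ^ 2) :=
    mul_nonneg (one_div_nonneg.mpr hm)
      (setIntegral_nonneg measurableSet_Iio fun t _ => by positivity)
  rw [QI_eq hu]
  linarith

theorem neg_le_QI_div_nR (ha : 0 ≤ a) (hm : 0 ≤ m) (hγ : 0 ≤ γ) (hu : MemB1 u) (hn : nR u ≠ 0) :
    -γ ≤ QI a m γ ξ u / nR u := by
  rw [le_div_iff₀ (nR_pos_of_ne_zero hn), nR_eq_add hu]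
  have hP : 0 ≤ np u := setIntegral_nonneg measurableSet_Ioi fun t _ => sq_nonneg (u t)
  have hN : 0 ≤ ∫ t in Iio 0, u t ^ 2 := setIntegral_nonneg measurableSet_Iio fun t _ => sq_nonneg _
  nlinarith [le_QI (a := a) (γ := γ) (ξ := ξ) hu hm, mul_nonneg (mul_nonneg ha hγ) hN,
    mul_nonneg hγ hN]

theorem mu1_le_QI_div_nR (ha : 0 ≤ a) (hm : 0 ≤ m) (hγ : 0 ≤ γ) (hu : MemB1 u) (hn : nR u ≠ 0) :
    mu1 a m γ ξ ≤ QI a m γ ξ u / nR u :=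
  csInf_le ⟨-γ, by rintro _ ⟨v, hv, hvn, rfl⟩; exact neg_le_QI_div_nR ha hm hγ hv hvn⟩
    ⟨u, hu, hn, rfl⟩

theorem bddBelow_range_mu1 (ha : 0 ≤ a) (hm : 0 ≤ m) (hγ : 0 ≤ γ) :
    BddBelow (range (mu1 a m γ)) :=
  ⟨-γ, by
    rintro _ ⟨ξ, rfl⟩
    exact Real.le_sInf (by rintro _ ⟨u, hu, hn, rfl⟩; exact neg_le_QI_div_nR ha hm hγ hu hn)
      (neg_nonpos.mpr hγ)⟩

theorem exists_QI_lt_of_sInf_range_mu1_lt {ε : ℝ} (h : sInf (range (mu1 a m γ)) < ε) :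
    ∃ ξ u, MemB1 u ∧ nR u ≠ 0 ∧ QI a m γ ξ u < ε * nR u := by
  obtain ⟨_, ⟨ξ, rfl⟩, hξ⟩ := exists_lt_of_csInf_lt (range_nonempty _) h
  obtain ⟨v, hv, hvn⟩ := exists_memB1_nR_ne_zero
  obtain ⟨_, ⟨u, hu, hn, rfl⟩, hlt⟩ :=
    exists_lt_of_csInf_lt (s := {r | ∃ u, MemB1 u ∧ nR u ≠ 0 ∧ r = QI a m γ ξ u / nR u})
      ⟨_, v, hv, hvn, rfl⟩ hξ
  exact ⟨ξ, u, hu, hn, (div_lt_iff₀ (nR_pos_of_ne_zero hn)).mp hlt⟩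

end QI

theorem exists_pos_forall_lt_mul_sub {a α c d : ℝ} (ha : 0 < a) (hα : 0 < α) (hc : 0 < c)
    (hd : 0 < d) :
    ∃ ε > 0, ∀ P N Q : ℝ, 0 ≤ P → 0 ≤ N → (c - α) * P + a * α * N ≤ Q → Q < ε * (N + P) →
      Q < d * (P - a * N) := by
  -- The first bound in the minimum forces `a (N + P) ≤ 2 (1 + a) P`; given that, the second
  -- yields `(α + d) Q < d c P`, which combined with `α (P - a N) ≥ c P - Q` is the claim.
  refine ⟨min (a * α / 2) (d * c * a / (2 * (α + d) * (1 + a))), by positivity, ?_⟩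
  intro P N Q hP hN hlow hQ
  have hε₁ := min_le_left (a * α / 2) (d * c * a / (2 * (α + d) * (1 + a)))
  have hε₂ := min_le_right (a * α / 2) (d * c * a / (2 * (α + d) * (1 + a)))
  set ε := min (a * α / 2) (d * c * a / (2 * (α + d) * (1 + a)))
  have hmass : a * (N + P) ≤ 2 * (1 + a) * P := by
    have hεNP := mul_le_mul_of_nonneg_right hε₁ (add_nonneg hN hP)
    have : a * α * N < a * α / 2 * (N + P) + α * P := by nlinarith
    nlinarith
  have hQc : (α + d) * Q < d * c * P :=
    calc (α + d) * Q < (α + d) * (ε * (N + P)) := mul_lt_mul_of_pos_left hQ (by positivity)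
      _ ≤ (α + d) * (d * c * a / (2 * (α + d) * (1 + a)) * (N + P)) := by gcongr
      _ = d * c * (a * (N + P)) / (2 * (1 + a)) := by field_simp
      _ ≤ d * c * P := by
        rw [div_le_iff₀ (by positivity)]
        nlinarith [mul_le_mul_of_nonneg_left hmass (mul_nonneg hd.le hc.le)]
  have : α * Q < α * (d * (P - a * N)) := by nlinarith
  exact lt_of_mul_lt_mul_left this hα.le

theorem sInf_range_mu1_neg_of_nonpos_of_lt {a m α β : ℝ} (ha : 0 < a) (hm : 0 ≤ m) (hα : 0 < α)
    (hαβ : α < β) (h : sInf (range (mu1 a m α)) ≤ 0) : sInf (range (mu1 a m β)) < 0 := by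
  obtain ⟨ε, hε, hmargin⟩ :=
    exists_pos_forall_lt_mul_sub ha hα (by norm_num : (0 : ℝ) < 1 / 12) (sub_pos.mpr hαβ)
  obtain ⟨ξ, u, hu, hn, hQ⟩ := exists_QI_lt_of_sInf_range_mu1_lt (h.trans_lt hε)
  have hβ : QI a m β ξ u < 0 := by
    rw [nR_eq_add hu] at hQ
    have := hmargin (np u) _ _ (setIntegral_nonneg measurableSet_Ioi fun t _ => sq_nonneg (u t))
      (setIntegral_nonneg measurableSet_Iio fun t _ => sq_nonneg (u t)) (le_QI hu hm) hQ
    rw [QI_eq_QI_sub hu α β]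
    linarith
  calc sInf (range (mu1 a m β)) ≤ mu1 a m β ξ :=
        csInf_le (bddBelow_range_mu1 ha.le hm (hα.trans hαβ).le) ⟨ξ, rfl⟩
    _ ≤ QI a m β ξ u / nR u := mu1_le_QI_div_nR ha.le hm (hα.trans hαβ).le hu hn
    _ < 0 := div_neg_of_neg_of_pos hβ (nR_pos_of_ne_zero hn)

theorem Theta0_nonneg : 0 ≤ Theta0 :=
  Real.sInf_nonneg <| by
    rintro _ ⟨ξ, rfl⟩
    refine Real.sInf_nonneg ?_
    rintro _ ⟨u, -, -, rfl⟩
    refine div_nonneg ?_ (setIntegral_nonneg measurableSet_Ioi fun t _ => sq_nonneg (u t))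
    rw [qRobin, zero_mul, add_zero]
    exact setIntegral_nonneg measurableSet_Ioi fun t _ => by positivity

/-- if `m > 1`, `α ∈ (Θ₀,1)` and `inf_ξ μ₁(a,m,α;ξ) = 0`, then for
every `β > α` one has `inf_ξ μ₁(a,m,β;ξ) < 0`; consequently `α` is the only
positive value for which the infimum vanishes. -/
theorem inf_mu1_neg_of_gt (a m α : ℝ) (ha : 0 < a) (hm : 1 < m)
    (hα : α ∈ Ioo Theta0 1)
    (h0 : sInf (Set.range (mu1 a m α)) = 0) :
    (∀ β : ℝ, α < β → sInf (Set.range (mu1 a m β)) < 0) ∧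
    (∀ α' : ℝ, 0 < α' → sInf (Set.range (mu1 a m α')) = 0 → α' = α) := by
  have hm0 : 0 ≤ m := zero_le_one.trans hm.le
  have hα0 : 0 < α := Theta0_nonneg.trans_lt hα.1
  refine ⟨fun β hβ => sInf_range_mu1_neg_of_nonpos_of_lt ha hm0 hα0 hβ h0.le, fun α' hα' h0' => ?_⟩
  rcases lt_trichotomy α' α with hlt | heq | hgt
  · exact absurd h0 (sInf_range_mu1_neg_of_nonpos_of_lt ha hm0 hα' hlt h0'.le).ne
  · exact heq
  · exact absurd h0' (sInf_range_mu1_neg_of_nonpos_of_lt ha hm0 hα0 hgt h0.le).ne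
end
end
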